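/- Let m ≥ 1, 1 ≤ p < ∞, let Ω ⊂ ℝ^m be open, let φ be a mollifier on B^m_1, and let ψ ∈ C^∞(Ω) be a nonnegative function with ‖Dψ‖_{L^∞(Ω)} < 1. Let ω ⊂ { x ∈ Ω : dist(x, ∂Ω) ≥ ψ(x) } be measurable. Then for every u ∈ L^p(Ω; ℝ^ν), the map x ↦ φ_ψ ∗ u(x) is well defined on ω and ‖φ_ψ ∗ u‖_{L^p(ω)} ≤ (1 − ‖Dψ‖_{L^∞(Ω)})^{−1/p} ‖u‖_{L^p(Ω)}. -/

import Mathlib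

/-!
Jensen's inequality for the probability measure `φ(z) dz` bounds `|φ_ψ ∗ u(x)|^p` by
`∫ φ(z) |u(x + ψ(x) z)|^p dz`. After exchanging the integrals it suffices to bound
`∫_ω |u(x + ψ(x) z)|^p dx` for each fixed `z` in the unit ball. The map `x ↦ x + ψ(x) z` sends `ω`
into `Ω`; it is injective because `ψ` is `K`-Lipschitz on every ball `B(x, ψ(x)) ⊆ Ω` and
`K |z| < 1`, and its Jacobian `1 + Dψ(x) z` is at least `1 - K`. The change of variables formula
therefore costs at most the factor `(1 - K)⁻¹`.
-/

open MeasureTheory Set Metric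
open scoped ENNReal
noncomputable section

/-- `ℝ^m` with the Euclidean norm. -/
abbrev Eucl (n : ℕ) : Type := EuclideanSpace ℝ (Fin n)

/-- `φ` is a mollifier: a smooth nonnegative radial function, compactly supported in the open
unit ball `B^m_1`, with integral `1`. -/
def IsMollifier (m : ℕ) (φ : Eucl m → ℝ) : Prop :=
  ContDiff ℝ (⊤ : ℕ∞) φ ∧ HasCompactSupport φ ∧ tsupport φ ⊆ Metric.ball 0 1 ∧
    (∀ x, 0 ≤ φ x) ∧ (∀ x y : Eucl m, ‖x‖ = ‖y‖ → φ x = φ y) ∧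
    (∫ x in Metric.ball (0 : Eucl m) 1, φ x) = 1

theorem ContinuousLinearMap.det_id_add_smulRight {E : Type*} [NormedAddCommGroup E]
    [NormedSpace ℝ E] [FiniteDimensional ℝ E] (ℓ : E →L[ℝ] ℝ) (z : E) :
    (ContinuousLinearMap.id ℝ E + ℓ.smulRight z).det = 1 + ℓ z := by
  let b := Module.finBasis ℝ E
  have hmat : LinearMap.toMatrix b b (ContinuousLinearMap.id ℝ E + ℓ.smulRight z : E →L[ℝ] E)
      = 1 + Matrix.vecMulVec (b.repr z) (ℓ ∘ b) := by
    ext i j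
    simp [LinearMap.toMatrix_apply, Matrix.vecMulVec_apply, Matrix.one_apply,
      Finsupp.single_apply, eq_comm, mul_comm]
  rw [ContinuousLinearMap.det, ← LinearMap.det_toMatrix b, hmat, Matrix.vecMulVec_eq (Fin 1)]
  refine (Matrix.det_one_add_replicateCol_mul_replicateRow _ _).trans ?_
  simp only [dotProduct, Function.comp_apply, mul_comm (ℓ _), ← smul_eq_mul, ← map_smul,
    ← map_sum, b.sum_repr]

theorem ContinuousLinearMap.one_sub_norm_le_det_id_add_smulRight {E : Type*}
    [NormedAddCommGroup E] [NormedSpace ℝ E] [FiniteDimensional ℝ E] (ℓ : E →L[ℝ] ℝ) {z : E}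
    (hz : ‖z‖ ≤ 1) : 1 - ‖ℓ‖ ≤ (ContinuousLinearMap.id ℝ E + ℓ.smulRight z).det := by
  have h : |ℓ z| ≤ ‖ℓ‖ :=
    (ℓ.le_opNorm z).trans (mul_le_of_le_one_right (norm_nonneg ℓ) hz)
  rw [ℓ.det_id_add_smulRight]
  linarith [neg_abs_le (ℓ z)]

theorem ball_subset_of_ofReal_le_infEDist_frontier {E : Type*} [NormedAddCommGroup E]
    [NormedSpace ℝ E] [FiniteDimensional ℝ E] {s : Set E} {x : E} {r : ℝ} (hx : x ∈ s)
    (h : ENNReal.ofReal r ≤ infEDist x (frontier s)) : ball x r ⊆ s := by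
  rcases eq_or_ne s univ with rfl | hs
  · exact subset_univ _
  obtain ⟨y, hy, hxy⟩ := exists_mem_frontier_infDist_compl_eq_dist hx hs
  have : r ≤ infDist x sᶜ := by
    rw [hxy, ← ENNReal.ofReal_le_ofReal_iff dist_nonneg, ← edist_dist]
    exact h.trans (infEDist_le_edist_of_mem hy)
  exact (ball_subset_ball this).trans ball_infDist_compl_subset

theorem rpow_lintegral_le_lintegral_rpow {α : Type*} [MeasurableSpace α] {μ : Measure α}
    [IsProbabilityMeasure μ] {p : ℝ} (hp : 1 ≤ p) {f : α → ℝ≥0∞} (hf : AEMeasurable f μ) :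
    (∫⁻ a, f a ∂μ) ^ p ≤ ∫⁻ a, f a ^ p ∂μ := by
  have h := eLpNorm'_le_eLpNorm'_of_exponent_le zero_lt_one hp μ hf.aestronglyMeasurable
  simp only [eLpNorm', enorm_eq_self, ENNReal.rpow_one, div_one] at h
  calc (∫⁻ a, f a ∂μ) ^ p ≤ ((∫⁻ a, f a ^ p ∂μ) ^ (1 / p)) ^ p := by gcongr
    _ = ∫⁻ a, f a ^ p ∂μ := by
      rw [← ENNReal.rpow_mul, one_div_mul_cancel (by positivity), ENNReal.rpow_one]

section Averaging

variable {α β E : Type*} [MeasurableSpace α] [MeasurableSpace β] [NormedAddCommGroup E]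
  [NormedSpace ℝ E] {φ : β → ℝ} {p : ℝ}

theorem enorm_integral_smul_rpow_le {ν : Measure β} (hφm : Measurable φ) (hφ0 : ∀ b, 0 ≤ φ b)
    (hφ1 : ∫⁻ b, ENNReal.ofReal (φ b) ∂ν = 1) {f : β → E} (hf : AEStronglyMeasurable f ν)
    (hp : 1 ≤ p) :
    ‖∫ b, φ b • f b ∂ν‖ₑ ^ p ≤ ∫⁻ b, ENNReal.ofReal (φ b) * ‖f b‖ₑ ^ p ∂ν := by
  set w : β → ℝ≥0∞ := fun b => ENNReal.ofReal (φ b)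
  have hw : AEMeasurable w ν := hφm.ennreal_ofReal.aemeasurable
  have : IsProbabilityMeasure (ν.withDensity w) :=
    ⟨by rwa [withDensity_apply _ MeasurableSet.univ, Measure.restrict_univ]⟩
  calc ‖∫ b, φ b • f b ∂ν‖ₑ ^ p ≤ (∫⁻ b, ‖f b‖ₑ ∂ν.withDensity w) ^ p := by
        gcongr
        rw [lintegral_withDensity_eq_lintegral_mul₀ hw hf.enorm]
        refine (enorm_integral_le_lintegral_enorm _).trans_eq (lintegral_congr fun b => ?_)
        simp [w, enorm_smul, Real.enorm_of_nonneg (hφ0 b)]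
    _ ≤ ∫⁻ b, ‖f b‖ₑ ^ p ∂ν.withDensity w :=
        rpow_lintegral_le_lintegral_rpow hp
          (hf.enorm.mono_ac (withDensity_absolutelyContinuous ν w))
    _ = ∫⁻ b, ENNReal.ofReal (φ b) * ‖f b‖ₑ ^ p ∂ν :=
        lintegral_withDensity_eq_lintegral_mul₀ hw (hf.enorm.pow_const p)

theorem lintegral_enorm_integral_smul_rpow_le {μ : Measure α} {ν : Measure β} [SFinite μ]
    [SFinite ν] (hφm : Measurable φ) (hφ0 : ∀ b, 0 ≤ φ b)
    (hφ1 : ∫⁻ b, ENNReal.ofReal (φ b) ∂ν = 1) {G : α → β → E}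
    (hG : AEStronglyMeasurable (Function.uncurry G) (μ.prod ν)) (hp : 1 ≤ p) {M : ℝ≥0∞}
    (hM : ∀ᵐ b ∂ν, ∫⁻ a, ‖G a b‖ₑ ^ p ∂μ ≤ M) :
    ∫⁻ a, ‖∫ b, φ b • G a b ∂ν‖ₑ ^ p ∂μ ≤ M :=
  calc ∫⁻ a, ‖∫ b, φ b • G a b ∂ν‖ₑ ^ p ∂μ
      ≤ ∫⁻ a, ∫⁻ b, ENNReal.ofReal (φ b) * ‖G a b‖ₑ ^ p ∂ν ∂μ := by
        refine lintegral_mono_ae ?_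
        filter_upwards [hG.prodMk_left] with a ha
        exact enorm_integral_smul_rpow_le hφm hφ0 hφ1 ha hp
    _ = ∫⁻ b, ENNReal.ofReal (φ b) * ∫⁻ a, ‖G a b‖ₑ ^ p ∂μ ∂ν := by
        rw [lintegral_lintegral_swap]
        · refine lintegral_congr fun b => ?_
          rw [lintegral_const_mul' _ _ ENNReal.ofReal_ne_top]
        · exact (hφm.ennreal_ofReal.comp measurable_snd).aemeasurable.mul
            (hG.enorm.pow_const p)
    _ ≤ ∫⁻ b, ENNReal.ofReal (φ b) * M ∂ν := lintegral_mono_ae (by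
        filter_upwards [hM] with b hb using mul_le_mul_right hb _)
    _ = M := by
        rw [lintegral_mul_const _ hφm.ennreal_ofReal, hφ1, one_mul]

end Averaging

theorem eLpNorm_le_rpow_mul_eLpNorm_of_lintegral_le {α β E F : Type*} [MeasurableSpace α]
    [MeasurableSpace β] [NormedAddCommGroup E] [NormedAddCommGroup F] {μ : Measure α}
    {ν : Measure β} {f : α → E} {g : β → F} {p : ℝ} (hp : 0 < p) {C : ℝ≥0∞}
    (h : ∫⁻ a, ‖f a‖ₑ ^ p ∂μ ≤ C * ∫⁻ b, ‖g b‖ₑ ^ p ∂ν) :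
    eLpNorm f (ENNReal.ofReal p) μ ≤ C ^ (1 / p) * eLpNorm g (ENNReal.ofReal p) ν := by
  have hp0 : ENNReal.ofReal p ≠ 0 := by simpa using hp
  rw [eLpNorm_eq_lintegral_rpow_enorm_toReal hp0 ENNReal.ofReal_ne_top,
    eLpNorm_eq_lintegral_rpow_enorm_toReal hp0 ENNReal.ofReal_ne_top,
    ENNReal.toReal_ofReal hp.le, ← ENNReal.mul_rpow_of_nonneg _ _ (by positivity)]
  gcongr

theorem lintegral_comp_le_of_le_abs_det {E : Type*} [NormedAddCommGroup E] [NormedSpace ℝ E]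
    [FiniteDimensional ℝ E] [MeasurableSpace E] [BorelSpace E] (μ : Measure E)
    [μ.IsAddHaarMeasure] {s t : Set E} (hs : MeasurableSet s) {g : E → E}
    {g' : E → E →L[ℝ] E} (hg' : ∀ x ∈ s, HasFDerivWithinAt g (g' x) s x) (hinj : InjOn g s)
    (hst : MapsTo g s t) {c : ℝ} (hc : 0 < c) (hdet : ∀ x ∈ s, c ≤ |(g' x).det|)
    (f : E → ℝ≥0∞) :
    ∫⁻ x in s, f (g x) ∂μ ≤ (ENNReal.ofReal c)⁻¹ * ∫⁻ y in t, f y ∂μ := by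
  rw [← ENNReal.mul_le_iff_le_inv (by simpa using hc) ENNReal.ofReal_ne_top,
    ← lintegral_const_mul' _ _ ENNReal.ofReal_ne_top]
  calc ∫⁻ x in s, ENNReal.ofReal c * f (g x) ∂μ
      ≤ ∫⁻ x in s, ENNReal.ofReal |(g' x).det| * f (g x) ∂μ :=
        setLIntegral_mono' hs fun x hx => by gcongr; exact hdet x hx
    _ = ∫⁻ y in g '' s, f y ∂μ :=
        (lintegral_image_eq_lintegral_abs_det_fderiv_mul μ hs hg' hinj f).symm
    _ ≤ ∫⁻ y in t, f y ∂μ := lintegral_mono_set hst.image_subset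

theorem MeasureTheory.MemLp.integrableOn_of_subset {α E : Type*} [MeasurableSpace α]
    [NormedAddCommGroup E] {μ : Measure α} {p : ℝ≥0∞} (hp : 1 ≤ p) {f : α → E} {s t : Set α}
    (hf : MemLp f p (μ.restrict s)) (hts : t ⊆ s) (ht : μ t ≠ ∞) : IntegrableOn f t μ := by
  have : IsFiniteMeasure (μ.restrict t) := isFiniteMeasure_restrict.2 ht
  have hft := hf.restrict t
  rw [Measure.restrict_restrict_of_subset hts] at hft
  exact hft.integrable hp

section AddSmul

variable {E F : Type*} [NormedAddCommGroup E] [NormedSpace ℝ E] [NormedAddCommGroup F]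
  [NormedSpace ℝ F]

theorem add_smul_mem_of_ball_subset {Ω : Set E} {x z : E} {r : ℝ} (hx : x ∈ Ω) (hr : 0 ≤ r)
    (hball : ball x r ⊆ Ω) (hz : ‖z‖ < 1) : x + r • z ∈ Ω := by
  rcases hr.eq_or_lt with rfl | hr
  · simpa using hx
  · refine hball ?_
    rw [mem_ball, dist_eq_norm, add_sub_cancel_left, norm_smul, Real.norm_of_nonneg hr.le]
    exact mul_lt_of_lt_one_right hr hz

theorem abs_sub_le_mul_norm_of_ball_subset {Ω : Set E} {ψ : E → ℝ} {K : ℝ}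
    (hψ : DifferentiableOn ℝ ψ Ω) (hDψ : ∀ x ∈ Ω, ‖fderivWithin ℝ ψ Ω x‖ ≤ K) {a b : E}
    {r : ℝ} (hball : ball b r ⊆ Ω) (ha : a ∈ ball b r) : |ψ a - ψ b| ≤ K * ‖a - b‖ :=
  (convex_ball b r).norm_image_sub_le_of_norm_hasFDerivWithin_le
    (fun w hw => (hψ w (hball hw)).hasFDerivWithinAt.mono hball)
    (fun w hw => hDψ w (hball hw)) (mem_ball_self (pos_of_mem_ball ha)) ha

theorem injOn_add_smul {s : Set E} {ψ : E → ℝ} {K : ℝ} (hK : K ≤ 1)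
    (hψ0 : ∀ x ∈ s, 0 ≤ ψ x)
    (hlip : ∀ a ∈ s, ∀ b ∈ s, ‖a - b‖ < ψ b → |ψ a - ψ b| ≤ K * ‖a - b‖) {z : E}
    (hz : ‖z‖ < 1) : InjOn (fun x => x + ψ x • z) s := by
  have key : ∀ a ∈ s, ∀ b ∈ s, a + ψ a • z = b + ψ b • z → ψ a ≤ ψ b → a = b := by
    intro a ha b hb hab hle
    have hdist : ‖a - b‖ = (ψ b - ψ a) * ‖z‖ := by
      rw [sub_eq_sub_iff_add_eq_add.2 (hab.trans (add_comm _ _)), ← sub_smul, norm_smul,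
        Real.norm_of_nonneg (sub_nonneg.2 hle)]
    rcases (sub_nonneg.2 hle).eq_or_lt with h0 | hpos
    · rwa [← h0, zero_mul, norm_eq_zero, sub_eq_zero] at hdist
    · have hlt : ‖a - b‖ < ψ b := by
        rw [hdist]
        exact (mul_lt_of_lt_one_right hpos hz).trans_le (by linarith [hψ0 a ha])
      have hlip' := hlip a ha b hb hlt
      rw [abs_sub_comm, abs_of_pos hpos, hdist] at hlip'
      nlinarith [mul_nonneg (sub_nonneg.2 hK) (mul_nonneg hpos.le (norm_nonneg z)),
        mul_pos hpos (sub_pos.2 hz)]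
  intro a ha b hb hab
  rcases le_total (ψ a) (ψ b) with h | h
  · exact key a ha b hb hab h
  · exact (key b hb a ha hab.symm h).symm

theorem integrableOn_smul_comp_add_smul [MeasurableSpace E] [BorelSpace E]
    [FiniteDimensional ℝ E] (μ : Measure E) [μ.IsAddHaarMeasure] {φ : E → ℝ}
    (hφ : Continuous φ) (hφc : HasCompactSupport φ) {u : E → F} {x : E} {r : ℝ} (hr : 0 ≤ r)
    (hu : IntegrableOn u (ball x r) μ) :
    IntegrableOn (fun z => φ z • u (x + r • z)) (ball 0 1) μ := by
  have hcomp : IntegrableOn (fun z => u (x + r • z)) (ball 0 1) μ := by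
    rcases hr.eq_or_lt with rfl | hr
    · simpa using integrableOn_const (C := u x) measure_ball_lt_top.ne enorm_ne_top
    · rw [← integrable_indicator_iff measurableSet_ball] at hu ⊢
      refine ((hu.comp_add_left x).comp_smul hr.ne').congr
        (Filter.Eventually.of_forall fun z => ?_)
      have hmem : x + r • z ∈ ball x r ↔ z ∈ ball 0 1 := by
        rw [mem_ball, mem_ball_zero_iff, dist_self_add_left, norm_smul,
          Real.norm_of_nonneg hr.le, mul_lt_iff_lt_one_right hr]
      dsimp only
      by_cases hz : z ∈ ball (0 : E) 1
      · rw [indicator_of_mem hz, indicator_of_mem (hmem.2 hz)]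
      · rw [indicator_of_notMem hz, indicator_of_notMem (mt hmem.1 hz)]
  exact hcomp.smul_of_top_right ((hφ.memLp_top_of_hasCompactSupport hφc μ).restrict (ball 0 1))

theorem lintegral_comp_add_smul_le [MeasurableSpace E] [BorelSpace E] [FiniteDimensional ℝ E]
    (μ : Measure E) [μ.IsAddHaarMeasure] {Ω s : Set E} (hs : MeasurableSet s) (hsΩ : s ⊆ Ω)
    {ψ : E → ℝ} (hψ : DifferentiableOn ℝ ψ Ω) (hψ0 : ∀ x ∈ s, 0 ≤ ψ x)
    (hball : ∀ x ∈ s, ball x (ψ x) ⊆ Ω) {K : ℝ} (hK : K < 1)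
    (hDψ : ∀ x ∈ Ω, ‖fderivWithin ℝ ψ Ω x‖ ≤ K) {z : E} (hz : ‖z‖ < 1) (f : E → ℝ≥0∞) :
    ∫⁻ x in s, f (x + ψ x • z) ∂μ ≤ (ENNReal.ofReal (1 - K))⁻¹ * ∫⁻ y in Ω, f y ∂μ := by
  refine lintegral_comp_le_of_le_abs_det μ hs
    (g' := fun x => ContinuousLinearMap.id ℝ E + (fderivWithin ℝ ψ Ω x).smulRight z)
    (fun x hx => ((hasFDerivWithinAt_id x Ω).add
      ((hψ x (hsΩ hx)).hasFDerivWithinAt.smul_const z)).mono hsΩ)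
    (injOn_add_smul hK.le hψ0 (fun a _ b hb hab => abs_sub_le_mul_norm_of_ball_subset hψ hDψ
      (hball b hb) (mem_ball_iff_norm.2 hab)) hz)
    (fun x hx => add_smul_mem_of_ball_subset (hsΩ hx) (hψ0 x hx) (hball x hx) hz)
    (sub_pos.2 hK) (fun x hx => ?_) f
  calc 1 - K ≤ 1 - ‖fderivWithin ℝ ψ Ω x‖ := by linarith [hDψ x (hsΩ hx)]
    _ ≤ _ := (fderivWithin ℝ ψ Ω x).one_sub_norm_le_det_id_add_smulRight hz.le
    _ ≤ _ := le_abs_self _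

end AddSmul

theorem IsMollifier.lintegral_ofReal_eq_one {m : ℕ} {φ : Eucl m → ℝ} (hφ : IsMollifier m φ) :
    ∫⁻ z in ball (0 : Eucl m) 1, ENNReal.ofReal (φ z) = 1 := by
  obtain ⟨hφs, hφc, -, hφ0, -, hφint⟩ := hφ
  rw [← ofReal_integral_eq_lintegral_ofReal
    (hφs.continuous.integrable_of_hasCompactSupport hφc).integrableOn
    (Filter.Eventually.of_forall hφ0), hφint, ENNReal.ofReal_one]

theorem adaptive_smoothing_Lp_bound_general
    (m ν : ℕ) (p : ℝ) (hp : 1 ≤ p)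
    (Ω : Set (Eucl m))
    (φ : Eucl m → ℝ) (hφ : IsMollifier m φ)
    (ψ : Eucl m → ℝ) (hψs : ContDiffOn ℝ (⊤ : ℕ∞) ψ Ω) (hψ0 : ∀ x ∈ Ω, 0 ≤ ψ x)
    (K : ℝ) (hK1 : K < 1)
    (hDψ : ∀ x ∈ Ω, ‖fderivWithin ℝ ψ Ω x‖ ≤ K)
    (ω : Set (Eucl m)) (hωm : MeasurableSet ω)
    (hω : ω ⊆ {x ∈ Ω | ENNReal.ofReal (ψ x) ≤ EMetric.infEdist x (frontier Ω)})
    (u : Eucl m → Eucl ν) (hum : Measurable u)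
    (hu : MemLp u (ENNReal.ofReal p) (volume.restrict Ω)) :
    (∀ x ∈ ω, IntegrableOn (fun z => φ z • u (x + ψ x • z)) (Metric.ball 0 1) volume) ∧
    eLpNorm (fun x => ∫ z in Metric.ball (0 : Eucl m) 1, φ z • u (x + ψ x • z))
        (ENNReal.ofReal p) (volume.restrict ω)
      ≤ ENNReal.ofReal ((1 - K) ^ (-(1 / p))) *
          eLpNorm u (ENNReal.ofReal p) (volume.restrict Ω) := by
  have hφ1 := hφ.lintegral_ofReal_eq_one
  obtain ⟨hφs, hφc, -, hφ0, -, -⟩ := hφ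
  have hωΩ : ω ⊆ Ω := fun x hx => (hω hx).1
  have hball : ∀ x ∈ ω, ball x (ψ x) ⊆ Ω := fun x hx =>
    ball_subset_of_ofReal_le_infEDist_frontier (hω hx).1 (hω hx).2
  refine ⟨fun x hx => integrableOn_smul_comp_add_smul volume hφs.continuous hφc
    (hψ0 x (hωΩ hx)) (hu.integrableOn_of_subset (by simpa using hp) (hball x hx)
      measure_ball_lt_top.ne), ?_⟩
  have hψm : AEMeasurable ψ (volume.restrict ω) := (hψs.continuousOn.mono hωΩ).aemeasurable hωm
  have hG : AEStronglyMeasurable (Function.uncurry fun x z => u (x + ψ x • z))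
      ((volume.restrict ω).prod (volume.restrict (ball (0 : Eucl m) 1))) :=
    (hum.comp_aemeasurable (measurable_fst.aemeasurable.add
      (hψm.comp_fst.smul measurable_snd.aemeasurable))).aestronglyMeasurable
  have hLp := lintegral_enorm_integral_smul_rpow_le hφs.continuous.measurable hφ0 hφ1 hG hp
    (ae_restrict_of_forall_mem measurableSet_ball fun z hz =>
      lintegral_comp_add_smul_le volume hωm hωΩ (hψs.differentiableOn (by simp))
        (fun x hx => hψ0 x (hωΩ hx)) hball hK1 hDψ (mem_ball_zero_iff.1 hz) (‖u ·‖ₑ ^ p))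
  refine (eLpNorm_le_rpow_mul_eLpNorm_of_lintegral_le (by linarith) hLp).trans_eq ?_
  rw [ENNReal.inv_rpow, ← ENNReal.rpow_neg, ENNReal.ofReal_rpow_of_pos (by linarith)]

/-- **`L^p` bound for adaptive smoothing.**
Let `Ω ⊆ ℝ^m` be open, `φ` a mollifier, and `ψ ∈ C^∞(Ω)` nonnegative with
`‖Dψ‖_{L^∞(Ω)} ≤ K < 1`. Let `ω ⊆ {x ∈ Ω : dist(x, ∂Ω) ≥ ψ(x)}` be measurable. Then for
every `u ∈ L^p(Ω; ℝ^ν)`, the adaptive convolution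
`φ_ψ ∗ u(x) = ∫_{B_1} φ(z) u(x + ψ(x) z) dz` is well defined on `ω`, and
`‖φ_ψ ∗ u‖_{L^p(ω)} ≤ (1 - K)^{-1/p} ‖u‖_{L^p(Ω)}`. -/
theorem adaptive_smoothing_Lp_bound
    (m ν : ℕ) (hm : 1 ≤ m) (p : ℝ) (hp : 1 ≤ p)
    (Ω : Set (Eucl m)) (hΩ : IsOpen Ω)
    (φ : Eucl m → ℝ) (hφ : IsMollifier m φ)
    (ψ : Eucl m → ℝ) (hψs : ContDiffOn ℝ (⊤ : ℕ∞) ψ Ω) (hψ0 : ∀ x ∈ Ω, 0 ≤ ψ x)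
    (K : ℝ) (hK0 : 0 ≤ K) (hK1 : K < 1)
    (hDψ : ∀ x ∈ Ω, ‖fderivWithin ℝ ψ Ω x‖ ≤ K)
    (ω : Set (Eucl m)) (hωm : MeasurableSet ω)
    (hω : ω ⊆ {x ∈ Ω | ENNReal.ofReal (ψ x) ≤ EMetric.infEdist x (frontier Ω)})
    (u : Eucl m → Eucl ν) (hum : Measurable u)
    (hu : MemLp u (ENNReal.ofReal p) (volume.restrict Ω)) :
    (∀ x ∈ ω, IntegrableOn (fun z => φ z • u (x + ψ x • z)) (Metric.ball 0 1) volume) ∧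
    eLpNorm (fun x => ∫ z in Metric.ball (0 : Eucl m) 1, φ z • u (x + ψ x • z))
        (ENNReal.ofReal p) (volume.restrict ω)
      ≤ ENNReal.ofReal ((1 - K) ^ (-(1 / p))) *
          eLpNorm u (ENNReal.ofReal p) (volume.restrict Ω) :=
  adaptive_smoothing_Lp_bound_general m ν p hp Ω φ hφ ψ hψs hψ0 K hK1 hDψ ω hωm hω u hum hu
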